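/- Two permutations u, v ∈ S_n are strongly shift equivalent (one can be obtained from the other by a finite sequence of rigid shifts) if and only if they are super-strongly Wilf equivalent, i.e., Δ_i(u^{-1}) = Δ_i(v^{-1}) for all i ∈ [n-1]. -/

import Mathlib

/-!
Column `j` of `u` has height `≥ i` iff `j + 1` is among the letters `s_i, …, s_n` of `s = u⁻¹`,
so `Δ_i(u⁻¹)` is the gap vector of the superlevel set `{j | u_j ≥ i}`; two finite sets have the
same gap vector iff they are translates of each other. A rigid shift at height `h` by `k` fixes
the superlevel sets of levels `≤ h` and translates those of levels `> h` by `k`, hence preserves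
every `Δ_i`. Conversely, if all `Δ_i` agree, let `h + 1` be the lowest level at which the
superlevel sets of `u` and `v` differ: they are translates, and a rigid shift at height `h` of one
of the two words makes them agree without disturbing the lower levels. Induction on this level
concludes.
-/

/-- Vector of consecutive differences of a list. -/
def diffs (l : List ℕ) : List ℕ := List.zipWith (fun a b => b - a) l l.tail

/-- Δ(X): consecutive differences of the increasing enumeration of a finite set. -/
def setDiffs (X : Finset ℕ) : List ℕ := diffs (X.sort (· ≤ ·))

/-- c̄(Δ) = {c, c+d₁, c+d₁+d₂, ...}. -/
def barSet (c : ℕ) (ds : List ℕ) : Finset ℕ :=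
  ((List.range (ds.length + 1)).map (fun j => c + (ds.take j).sum)).toFinset

/-- A finite set (of cardinality ≥ 2) is periodic if its consecutive differences are constant. -/
def PeriodicSet (X : Finset ℕ) : Prop :=
  2 ≤ X.card ∧ ∃ d, 0 < d ∧ setDiffs X = List.replicate (X.card - 1) d

/-- A vector is periodic if all its entries are equal to some positive d. -/
def PerVec (v : List ℕ) : Prop := ∃ d, 0 < d ∧ v = List.replicate v.length d

/-- Membership in D_{|u|,n}: injective word over [n], complement periodic,
no proper nonempty prefix has a periodic complement. -/
def MemD (n : ℕ) (u : List ℕ) : Prop :=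
  u.Nodup ∧ (∀ x ∈ u, x ∈ Finset.Icc 1 n) ∧
  PeriodicSet (Finset.Icc 1 n \ u.toFinset) ∧
  ∀ j, 1 ≤ j → j < u.length → ¬ PeriodicSet (Finset.Icc 1 n \ (u.take j).toFinset)

/-- A list is a permutation word of [n]. -/
def IsPermList (n : ℕ) (s : List ℕ) : Prop :=
  s.length = n ∧ s.Nodup ∧ s.toFinset = Finset.Icc 1 n

/-- s is the inverse permutation word of u (both permutations of [n]). -/
def InvPerm (n : ℕ) (u s : List ℕ) : Prop :=
  IsPermList n u ∧ IsPermList n s ∧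
  ∀ j k, j < n → k < n → (u.getD j 0 = k + 1 ↔ s.getD k 0 = j + 1)

/-- Δ_i(s): consecutive differences of {s_i, ..., s_n} (1-indexed). -/
def deltaVec (s : List ℕ) (i : ℕ) : List ℕ := setDiffs (s.drop (i - 1)).toFinset

/-- One transition of a pyramidal sequence: merge two adjacent entries,
or delete the leftmost, or delete the rightmost entry. -/
def PyrStep (v w : List ℕ) : Prop :=
  (∃ l a b r, v = l ++ a :: b :: r ∧ w = l ++ (a + b) :: r) ∨
  (∃ a r, v = a :: r ∧ w = r) ∨
  (∃ l a, v = l ++ [a] ∧ w = l)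

/-- A pyramidal sequence of vectors of size n, encoded as a list [Δ₁, ..., Δ_{n-1}]. -/
def IsPyramidal (n : ℕ) (P : List (List ℕ)) : Prop :=
  P.length = n - 1 ∧ P.getD 0 [] = List.replicate (n - 1) 1 ∧
  ∀ i, i + 1 < n - 1 → PyrStep (P.getD i []) (P.getD (i + 1) [])

/-- A trapezoidal sequence of height i of size n, encoded as [Δ₁, ..., Δ_{i+1}]:
Δ_{i+1} periodic, Δ_j not periodic for 2 ≤ j ≤ i. -/
def IsTrapezoidal (n i : ℕ) (T : List (List ℕ)) : Prop :=
  T.length = i + 1 ∧ T.getD 0 [] = List.replicate (n - 1) 1 ∧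
  (∀ j, j < i → PyrStep (T.getD j []) (T.getD (j + 1) [])) ∧
  PerVec (T.getD i []) ∧
  ∀ j, 1 ≤ j → j < i → ¬ PerVec (T.getD j [])

/-- Non-interval permutation of [m]: no prefix of length l, 2 ≤ l < m, has as
letter set an interval of consecutive integers. -/
def IsNonIntervalPerm (m : ℕ) (s : List ℕ) : Prop :=
  IsPermList m s ∧ ∀ l, 2 ≤ l → l < m → ¬ ∃ a, (s.take l).toFinset = Finset.Icc a (a + l - 1)

/-- v is obtained from u by a rigid shift of height h by k places to the left:
columns of height < h are untouched and receive nothing; each position of height ≥ h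
receives the excess (over h) of the column k places to its right; every block strictly
above the cut lands on a column of height ≥ h. -/
def RigidShiftL (n h k : ℕ) (u v : List ℕ) : Prop :=
  IsPermList n u ∧ IsPermList n v ∧
  (∀ j, j < n → u.getD j 0 < h → v.getD j 0 = u.getD j 0) ∧
  (∀ j, j < n → h ≤ u.getD j 0 → v.getD j 0 = h + (u.getD (j + k) 0 - h)) ∧
  (∀ j, j < n → h < u.getD j 0 → k ≤ j ∧ h ≤ u.getD (j - k) 0)

/-- Strong shift equivalence: finite sequences of rigid shifts (in either direction). -/
def StrongShiftEq (n : ℕ) (u v : List ℕ) : Prop :=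
  Relation.ReflTransGen (fun a b => ∃ h k, RigidShiftL n h k a b ∨ RigidShiftL n h k b a) u v

/-- Shift equivalence: finite sequences of rigid shifts and reversals. -/
def ShiftEq (n : ℕ) (u v : List ℕ) : Prop :=
  Relation.ReflTransGen
    (fun a b => (∃ h k, RigidShiftL n h k a b ∨ RigidShiftL n h k b a) ∨ b = a.reverse) u v

/-- Super-strong Wilf equivalence of permutation words of [n], characterized by
equality of all Δ_i of the inverses. -/
def SSWilf (n : ℕ) (u v : List ℕ) : Prop :=
  ∃ s t, InvPerm n u s ∧ InvPerm n v t ∧ ∀ i, 1 ≤ i → i ≤ n - 1 → deltaVec s i = deltaVec t i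

lemma diffs_cons_cons (a b : ℕ) (l : List ℕ) : diffs (a :: b :: l) = (b - a) :: diffs (b :: l) :=
  rfl

lemma length_diffs (l : List ℕ) : (diffs l).length = l.length - 1 := by
  simp [diffs]

lemma diffs_map_add (k : ℕ) : ∀ l : List ℕ, diffs (l.map (· + k)) = diffs l
  | [] | [_] => rfl
  | a :: b :: l => by
    have ih := diffs_map_add k (b :: l)
    simp only [List.map_cons] at ih ⊢
    rw [diffs_cons_cons, diffs_cons_cons, ih, Nat.add_sub_add_right]

lemma eq_map_add_of_diffs_eq (k : ℕ) : ∀ {a b : ℕ} {l₁ l₂ : List ℕ},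
    (a :: l₁).Pairwise (· ≤ ·) → (b :: l₂).Pairwise (· ≤ ·) → l₁.length = l₂.length →
    diffs (a :: l₁) = diffs (b :: l₂) → b = a + k → b :: l₂ = (a :: l₁).map (· + k)
  | _, _, [], [], _, _, _, _, hb => by simp [hb]
  | _, _, [], _ :: _, _, _, hlen, _, _ | _, _, _ :: _, [], _, _, hlen, _, _ => by simp at hlen
  | a, b, a' :: l₁, b' :: l₂, h₁, h₂, hlen, hd, hb => by
    rw [diffs_cons_cons, diffs_cons_cons, List.cons.injEq] at hd
    have ha : a ≤ a' := List.rel_of_pairwise_cons h₁ List.mem_cons_self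
    have hb' : b ≤ b' := List.rel_of_pairwise_cons h₂ List.mem_cons_self
    rw [eq_map_add_of_diffs_eq k h₁.of_cons h₂.of_cons (by simpa using hlen) hd.2 (by omega), hb]
    rfl

lemma setDiffs_map_add (X : Finset ℕ) (k : ℕ) :
    setDiffs (X.map (addRightEmbedding k)) = setDiffs X := by
  rw [setDiffs, setDiffs, ← Finset.map_sort _ _ (· ≤ ·) (· ≤ ·) (by simp)]
  exact diffs_map_add k _

lemma setDiffs_eq_nil_of_card_le_one {X : Finset ℕ} (hX : X.card ≤ 1) : setDiffs X = [] := by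
  rw [← List.length_eq_zero_iff, setDiffs, length_diffs, Finset.length_sort]
  omega

lemma exists_map_add_of_setDiffs_eq {X Y : Finset ℕ} (hX : X.Nonempty) (hcard : X.card = Y.card)
    (hd : setDiffs X = setDiffs Y) :
    ∃ k, Y = X.map (addRightEmbedding k) ∨ X = Y.map (addRightEmbedding k) := by
  have hY : Y.Nonempty := Finset.card_pos.1 (hcard ▸ hX.card_pos)
  obtain ⟨a, l₁, hsX⟩ := List.exists_cons_of_ne_nil (l := X.sort (· ≤ ·))
    (by simpa [← List.length_pos_iff] using hX)
  obtain ⟨b, l₂, hsY⟩ := List.exists_cons_of_ne_nil (l := Y.sort (· ≤ ·))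
    (by simpa [← List.length_pos_iff] using hY)
  wlog hab : a ≤ b generalizing X Y a b l₁ l₂
  · obtain ⟨k, hk⟩ := this hY hcard.symm hd.symm hX b l₂ hsY a l₁ hsX (by omega)
    exact ⟨k, hk.symm⟩
  have hlen : l₁.length = l₂.length := by
    have h := (Finset.length_sort (· ≤ ·)).trans (hcard.trans (Finset.length_sort (· ≤ ·)).symm)
    rw [hsX, hsY] at h
    exact Nat.succ.inj h
  have hsort : Y.sort (· ≤ ·) = (X.map (addRightEmbedding (b - a))).sort (· ≤ ·) := by
    rw [← Finset.map_sort _ _ (· ≤ ·) (· ≤ ·) (by simp), hsX, hsY]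
    refine eq_map_add_of_diffs_eq _ (hsX ▸ Finset.pairwise_sort _ _)
      (hsY ▸ Finset.pairwise_sort _ _) hlen (by rwa [setDiffs, setDiffs, hsX, hsY] at hd)
      (by omega)
  exact ⟨b - a, Or.inl (by simpa using congrArg List.toFinset hsort)⟩

namespace IsPermList

variable {n : ℕ} {u : List ℕ}

lemma getD_mem_Icc (hu : IsPermList n u) {j : ℕ} (hj : j < n) : u.getD j 0 ∈ Finset.Icc 1 n := by
  rw [← hu.2.2, List.getD_eq_getElem u 0 (by rw [hu.1]; exact hj)]
  exact List.mem_toFinset.2 (List.getElem_mem _)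

lemma getD_eq_zero (hu : IsPermList n u) {j : ℕ} (hj : n ≤ j) : u.getD j 0 = 0 :=
  List.getD_eq_default u 0 (by rw [hu.1]; exact hj)

lemma getD_le (hu : IsPermList n u) (j : ℕ) : u.getD j 0 ≤ n := by
  rcases Nat.lt_or_ge j n with hj | hj
  · exact (Finset.mem_Icc.1 (hu.getD_mem_Icc hj)).2
  · rw [hu.getD_eq_zero hj]
    exact Nat.zero_le n

lemma lt_of_getD_pos (hu : IsPermList n u) {j : ℕ} (h : 0 < u.getD j 0) : j < n := by
  by_contra hj
  rw [hu.getD_eq_zero (not_lt.1 hj)] at h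
  exact h.false

lemma getD_inj (hu : IsPermList n u) {j₁ j₂ : ℕ} (h₁ : j₁ < n) (h₂ : j₂ < n)
    (he : u.getD j₁ 0 = u.getD j₂ 0) : j₁ = j₂ := by
  rw [List.getD_eq_getElem u 0 (by rw [hu.1]; exact h₁),
    List.getD_eq_getElem u 0 (by rw [hu.1]; exact h₂)] at he
  exact (hu.2.1.getElem_inj_iff).1 he

lemma exists_getD_eq (hu : IsPermList n u) {x : ℕ} (hx : x ∈ Finset.Icc 1 n) :
    ∃ j < n, u.getD j 0 = x := by
  rw [← hu.2.2, List.mem_toFinset, List.mem_iff_getElem] at hx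
  obtain ⟨j, hj, rfl⟩ := hx
  exact ⟨j, hu.1 ▸ hj, List.getD_eq_getElem u 0 hj⟩

lemma of_ofFn {f : ℕ → ℕ} (hmem : ∀ j < n, f j ∈ Finset.Icc 1 n)
    (hinj : ∀ j₁ < n, ∀ j₂ < n, f j₁ = f j₂ → j₁ = j₂) :
    IsPermList n (List.ofFn fun j : Fin n => f j) := by
  have hnodup : (List.ofFn fun j : Fin n => f j).Nodup :=
    List.nodup_ofFn.2 fun a b he => Fin.ext (hinj a a.2 b b.2 he)
  refine ⟨List.length_ofFn, hnodup, Finset.eq_of_subset_of_card_le ?_ ?_⟩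
  · intro x hx
    obtain ⟨j, rfl⟩ := List.mem_ofFn.1 (List.mem_toFinset.1 hx)
    exact hmem j j.2
  · rw [List.toFinset_card_of_nodup hnodup, List.length_ofFn, Nat.card_Icc, Nat.add_sub_cancel]

end IsPermList

/-- The 0-indexed positions of the columns of height at least `i` in the skyline diagram of `u`. -/
def superlevelSet (n i : ℕ) (u : List ℕ) : Finset ℕ :=
  (Finset.range n).filter fun j => i ≤ u.getD j 0

@[simp]
lemma mem_superlevelSet {n i j : ℕ} {u : List ℕ} :
    j ∈ superlevelSet n i u ↔ j < n ∧ i ≤ u.getD j 0 := by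
  simp [superlevelSet]

lemma superlevelSet_zero (n : ℕ) (u : List ℕ) : superlevelSet n 0 u = Finset.range n := by
  ext j
  simp

lemma superlevelSet_anti {n i i' : ℕ} (u : List ℕ) (h : i ≤ i') :
    superlevelSet n i' u ⊆ superlevelSet n i u := fun j hj => by
  rw [mem_superlevelSet] at hj ⊢
  omega

namespace IsPermList

variable {n : ℕ} {u : List ℕ}

lemma superlevelSet_one (hu : IsPermList n u) : superlevelSet n 1 u = Finset.range n := by
  ext j
  simp only [mem_superlevelSet, Finset.mem_range, and_iff_left_iff_imp]
  exact fun hj => (Finset.mem_Icc.1 (hu.getD_mem_Icc hj)).1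

lemma superlevelSet_eq_empty (hu : IsPermList n u) {i : ℕ} (hi : n < i) :
    superlevelSet n i u = ∅ := by
  ext j
  simp only [mem_superlevelSet, Finset.notMem_empty, iff_false, not_and, not_le]
  exact fun _ => (hu.getD_le j).trans_lt hi

lemma card_superlevelSet (hu : IsPermList n u) {i : ℕ} (hi : 1 ≤ i) :
    (superlevelSet n i u).card = n + 1 - i := by
  have himage : (superlevelSet n i u).image (u.getD · 0) = Finset.Icc i n := by
    ext x
    simp only [Finset.mem_image, mem_superlevelSet, Finset.mem_Icc]
    constructor
    · rintro ⟨j, ⟨-, hj⟩, rfl⟩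
      exact ⟨hj, hu.getD_le j⟩
    · rintro ⟨hix, hxn⟩
      obtain ⟨j, hj, rfl⟩ := hu.exists_getD_eq (Finset.mem_Icc.2 ⟨hi.trans hix, hxn⟩)
      exact ⟨j, ⟨hj, hix⟩, rfl⟩
  rw [← Nat.card_Icc, ← himage, Finset.card_image_of_injOn]
  exact fun a ha b hb he => hu.getD_inj (mem_superlevelSet.1 ha).1 (mem_superlevelSet.1 hb).1 he

lemma ext_superlevelSet {v : List ℕ} (hu : IsPermList n u) (hv : IsPermList n v)
    (h : ∀ i, superlevelSet n i u = superlevelSet n i v) : u = v := by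
  have hval : ∀ j < n, u.getD j 0 = v.getD j 0 := by
    intro j hj
    have hu' := h (u.getD j 0) ▸ mem_superlevelSet.2 ⟨hj, le_rfl⟩
    have hv' := (h (v.getD j 0)).symm ▸ mem_superlevelSet.2 ⟨hj, le_rfl⟩
    exact le_antisymm (mem_superlevelSet.1 hu').2 (mem_superlevelSet.1 hv').2
  refine List.ext_getElem (hu.1.trans hv.1.symm) fun j h₁ h₂ => ?_
  rw [← List.getD_eq_getElem u 0 h₁, ← List.getD_eq_getElem v 0 h₂]
  exact hval j (hu.1 ▸ h₁)

end IsPermList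

lemma InvPerm.drop_toFinset {n i : ℕ} {u s : List ℕ} (hus : InvPerm n u s) (hi : 1 ≤ i) :
    (s.drop (i - 1)).toFinset = (superlevelSet n i u).map (addRightEmbedding 1) := by
  obtain ⟨hu, hs, hinv⟩ := hus
  ext p
  simp only [List.mem_toFinset, List.mem_drop_iff_getElem, Finset.mem_map, mem_superlevelSet,
    addRightEmbedding_apply]
  constructor
  · rintro ⟨m, hm, rfl⟩
    rw [← List.getD_eq_getElem s 0]
    have hmn : i - 1 + m < n := hs.1 ▸ (by omega)
    obtain ⟨hpos, hle⟩ := Finset.mem_Icc.1 (hs.getD_mem_Icc hmn)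
    have := (hinv (s.getD (i - 1 + m) 0 - 1) (i - 1 + m) (by omega) hmn).2 (by omega)
    exact ⟨s.getD (i - 1 + m) 0 - 1, ⟨by omega, by omega⟩, by omega⟩
  · rintro ⟨j, ⟨hj, hij⟩, rfl⟩
    have hle := hu.getD_le j
    have := (hinv j (u.getD j 0 - 1) hj (by omega)).1 (by omega)
    refine ⟨u.getD j 0 - i, by rw [hs.1]; omega, ?_⟩
    rw [← List.getD_eq_getElem s 0, ← this]
    congr 1
    omega

lemma InvPerm.deltaVec_eq {n i : ℕ} {u s : List ℕ} (hus : InvPerm n u s) (hi : 1 ≤ i) :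
    deltaVec s i = setDiffs (superlevelSet n i u) := by
  rw [deltaVec, hus.drop_toFinset hi, setDiffs_map_add]

namespace RigidShiftL

variable {n h k : ℕ} {a b : List ℕ}

lemma superlevelSet_of_le (R : RigidShiftL n h k a b) {i : ℕ} (hi : i ≤ h) :
    superlevelSet n i b = superlevelSet n i a := by
  obtain ⟨-, -, hlow, hhigh, -⟩ := R
  ext j
  simp only [mem_superlevelSet, and_congr_right_iff]
  intro hj
  rcases Nat.lt_or_ge (a.getD j 0) h with hc | hc
  · rw [hlow j hj hc]
  · rw [hhigh j hj hc]
    omega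

lemma map_superlevelSet_of_lt (R : RigidShiftL n h k a b) {i : ℕ} (hi : h < i) :
    (superlevelSet n i b).map (addRightEmbedding k) = superlevelSet n i a := by
  obtain ⟨ha, -, hlow, hhigh, hland⟩ := R
  ext x
  simp only [Finset.mem_map, mem_superlevelSet, addRightEmbedding_apply]
  constructor
  · rintro ⟨j, ⟨hj, hij⟩, rfl⟩
    have hc : h ≤ a.getD j 0 := by
      by_contra hc
      rw [hlow j hj (by omega)] at hij
      omega
    rw [hhigh j hj hc] at hij
    exact ⟨ha.lt_of_getD_pos (by omega), by omega⟩
  · rintro ⟨hx, hix⟩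
    obtain ⟨hkx, hland⟩ := hland x hx (by omega)
    refine ⟨x - k, ⟨by omega, ?_⟩, by omega⟩
    rw [hhigh (x - k) (by omega) hland, Nat.sub_add_cancel hkx]
    omega

lemma setDiffs_superlevelSet (R : RigidShiftL n h k a b) (i : ℕ) :
    setDiffs (superlevelSet n i b) = setDiffs (superlevelSet n i a) := by
  rcases le_or_gt i h with hi | hi
  · rw [R.superlevelSet_of_le hi]
  · rw [← R.map_superlevelSet_of_lt hi, setDiffs_map_add]

end RigidShiftL

lemma StrongShiftEq.setDiffs_superlevelSet {n : ℕ} {u v : List ℕ} (huv : StrongShiftEq n u v)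
    (i : ℕ) : setDiffs (superlevelSet n i u) = setDiffs (superlevelSet n i v) := by
  induction huv with
  | refl => rfl
  | tail _ hstep ih =>
    obtain ⟨h, k, R | R⟩ := hstep
    · exact ih.trans (R.setDiffs_superlevelSet i).symm
    · exact ih.trans (R.setDiffs_superlevelSet i)

def rigidShiftWord (n h k : ℕ) (u : List ℕ) : List ℕ :=
  List.ofFn fun j : Fin n => if u.getD j 0 < h then u.getD j 0 else h + (u.getD (j + k) 0 - h)

lemma getD_rigidShiftWord {n h k j : ℕ} {u : List ℕ} (hj : j < n) :
    (rigidShiftWord n h k u).getD j 0 =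
      if u.getD j 0 < h then u.getD j 0 else h + (u.getD (j + k) 0 - h) := by
  rw [rigidShiftWord, List.getD_eq_getElem _ 0 (by simpa), List.getElem_ofFn]

namespace IsPermList

variable {n h k : ℕ} {u : List ℕ}

/-- The columns above the cut land on all columns of height `≥ h` but one, since there is exactly
one column more of height `≥ h` than of height `> h`. -/
lemma eq_of_getD_add_le (hu : IsPermList n u) (hh : 1 ≤ h)
    (hsub : superlevelSet n (h + 1) u ⊆ (superlevelSet n h u).map (addRightEmbedding k))
    {j₁ j₂ : ℕ} (h₁ : j₁ ∈ superlevelSet n h u) (h₁' : u.getD (j₁ + k) 0 ≤ h)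
    (h₂ : j₂ ∈ superlevelSet n h u) (h₂' : u.getD (j₂ + k) 0 ≤ h) : j₁ = j₂ := by
  set F := (superlevelSet n h u).filter fun j => u.getD (j + k) 0 ≤ h
  have hdisj : Disjoint (F.map (addRightEmbedding k)) (superlevelSet n (h + 1) u) := by
    rw [Finset.disjoint_left]
    simp only [F, Finset.mem_map, Finset.mem_filter, addRightEmbedding_apply, mem_superlevelSet]
    rintro _ ⟨j, ⟨-, hj⟩, rfl⟩ ⟨-, hj'⟩
    omega
  have hF : F ⊆ superlevelSet n h u := Finset.filter_subset _ _
  have hcard := Finset.card_le_card (Finset.union_subset (Finset.map_subset_map.2 hF) hsub)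
  rw [Finset.card_union_of_disjoint hdisj, Finset.card_map, Finset.card_map,
    hu.card_superlevelSet hh, hu.card_superlevelSet (by omega)] at hcard
  exact (Finset.card_le_one (s := F)).1 (by omega) j₁ (Finset.mem_filter.2 ⟨h₁, h₁'⟩) j₂
    (Finset.mem_filter.2 ⟨h₂, h₂'⟩)

lemma rigidShiftL_rigidShiftWord (hu : IsPermList n u) (hh : 1 ≤ h) (hhn : h ≤ n)
    (hsub : superlevelSet n (h + 1) u ⊆ (superlevelSet n h u).map (addRightEmbedding k)) :
    RigidShiftL n h k u (rigidShiftWord n h k u) := by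
  have hland : ∀ j < n, h < u.getD j 0 → k ≤ j ∧ h ≤ u.getD (j - k) 0 := by
    intro j hj hhj
    obtain ⟨p, hp, rfl⟩ := Finset.mem_map.1 (hsub (mem_superlevelSet.2 ⟨hj, hhj⟩))
    rw [addRightEmbedding_apply, Nat.add_sub_cancel]
    exact ⟨Nat.le_add_left k p, (mem_superlevelSet.1 hp).2⟩
  have hperm : IsPermList n (rigidShiftWord n h k u) := by
    refine IsPermList.of_ofFn
      (f := fun j => if u.getD j 0 < h then u.getD j 0 else h + (u.getD (j + k) 0 - h))
      (fun j hj => ?_) (fun j₁ h₁ j₂ h₂ he => ?_)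
    · have hjk := hu.getD_le (j + k)
      split_ifs
      · exact hu.getD_mem_Icc hj
      · exact Finset.mem_Icc.2 ⟨by omega, by omega⟩
    · split_ifs at he with c₁ c₂ c₂
      · exact hu.getD_inj h₁ h₂ he
      · omega
      · omega
      by_cases c : u.getD (j₁ + k) 0 ≤ h
      · exact hu.eq_of_getD_add_le hh hsub (mem_superlevelSet.2 ⟨h₁, by omega⟩) c
          (mem_superlevelSet.2 ⟨h₂, by omega⟩) (by omega)
      · have := hu.getD_inj (hu.lt_of_getD_pos (j := j₁ + k) (by omega))
          (hu.lt_of_getD_pos (j := j₂ + k) (by omega)) (by omega)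
        omega
  refine ⟨hu, hperm, fun j hj hc => ?_, fun j hj hc => ?_, hland⟩
  · rw [getD_rigidShiftWord hj, if_pos hc]
  · rw [getD_rigidShiftWord hj, if_neg (not_lt.2 hc)]

end IsPermList

lemma exists_rigidShiftL_superlevelSet_eq {n h k : ℕ} {u v : List ℕ} (hv : IsPermList n v)
    (hh : 1 ≤ h) (hhn : h ≤ n) (hlow : ∀ i ≤ h, superlevelSet n i u = superlevelSet n i v)
    (hk : superlevelSet n (h + 1) v = (superlevelSet n (h + 1) u).map (addRightEmbedding k)) :
    ∃ w, RigidShiftL n h k v w ∧ ∀ i ≤ h + 1, superlevelSet n i w = superlevelSet n i u := by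
  have hsub : superlevelSet n (h + 1) v ⊆ (superlevelSet n h v).map (addRightEmbedding k) := by
    rw [hk, ← hlow h le_rfl]
    exact Finset.map_subset_map.2 (superlevelSet_anti u (Nat.le_succ h))
  have R := hv.rigidShiftL_rigidShiftWord hh hhn hsub
  refine ⟨_, R, fun i hi => ?_⟩
  rcases Nat.lt_or_ge h i with hi' | hi'
  · obtain rfl : i = h + 1 := by omega
    exact Finset.map_injective _ ((R.map_superlevelSet_of_lt hi').trans hk)
  · exact (R.superlevelSet_of_le hi').trans (hlow i hi').symm

lemma strongShiftEq_of_setDiffs_eq {n : ℕ} {u v : List ℕ} (hu : IsPermList n u)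
    (hv : IsPermList n v)
    (hd : ∀ i, 1 ≤ i → setDiffs (superlevelSet n i u) = setDiffs (superlevelSet n i v)) :
    StrongShiftEq n u v := by
  suffices H : ∀ m ≤ n + 1, ∀ u v, IsPermList n u → IsPermList n v →
      (∀ i, 1 ≤ i → setDiffs (superlevelSet n i u) = setDiffs (superlevelSet n i v)) →
      (∀ i ≤ m, superlevelSet n i u = superlevelSet n i v) → StrongShiftEq n u v from
    H 0 (Nat.zero_le _) u v hu hv hd fun i hi => by
      rw [Nat.le_zero.1 hi, superlevelSet_zero, superlevelSet_zero]
  intro m hm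
  induction hm using Nat.decreasingInduction with
  | self =>
    intro u v hu hv _ hQ
    obtain rfl := hu.ext_superlevelSet hv fun i => (le_or_gt i (n + 1)).elim (hQ i) fun hi => by
      rw [hu.superlevelSet_eq_empty (by omega), hv.superlevelSet_eq_empty (by omega)]
    exact .refl
  | of_succ h _ IH =>
    intro u v hu hv hd hlow
    by_cases hnext : superlevelSet n (h + 1) u = superlevelSet n (h + 1) v
    · exact IH u v hu hv hd fun i hi => (Nat.le_succ_iff.1 hi).elim (hlow i) (· ▸ hnext)
    have hh : 1 ≤ h := Nat.one_le_iff_ne_zero.2 fun h0 => hnext <| by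
      rw [h0, hu.superlevelSet_one, hv.superlevelSet_one]
    have hhn : h < n := lt_of_not_ge fun hnh => hnext <| by
      rw [hu.superlevelSet_eq_empty (by omega), hv.superlevelSet_eq_empty (by omega)]
    have hne : (superlevelSet n (h + 1) u).Nonempty := by
      rw [← Finset.card_pos, hu.card_superlevelSet (by omega)]
      omega
    have hcard := (hu.card_superlevelSet (i := h + 1) (by omega)).trans
      (hv.card_superlevelSet (by omega)).symm
    obtain ⟨k, hk | hk⟩ := exists_map_add_of_setDiffs_eq hne hcard (hd (h + 1) (by omega))
    · obtain ⟨w, R, hw⟩ := exists_rigidShiftL_superlevelSet_eq hv hh hhn.le hlow hk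
      refine .tail (IH u w hu R.2.1 (fun i hi => ?_) fun i hi => (hw i hi).symm) ⟨h, k, .inr R⟩
      exact (hd i hi).trans (R.setDiffs_superlevelSet i).symm
    · obtain ⟨w, R, hw⟩ :=
        exists_rigidShiftL_superlevelSet_eq hu hh hhn.le (fun i hi => (hlow i hi).symm) hk
      refine .head ⟨h, k, .inl R⟩ (IH w v R.2.1 hv (fun i hi => ?_) hw)
      exact (R.setDiffs_superlevelSet i).trans (hd i hi)

lemma strongShiftEq_iff_setDiffs_superlevelSet {n : ℕ} {u v : List ℕ} (hu : IsPermList n u)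
    (hv : IsPermList n v) :
    StrongShiftEq n u v ↔
      ∀ i, 1 ≤ i → i ≤ n - 1 → setDiffs (superlevelSet n i u) = setDiffs (superlevelSet n i v) := by
  refine ⟨fun huv i _ _ => huv.setDiffs_superlevelSet i,
    fun hd => strongShiftEq_of_setDiffs_eq hu hv fun i hi => ?_⟩
  rcases Nat.lt_or_ge i n with hin | hin
  · exact hd i hi (by omega)
  · rw [setDiffs_eq_nil_of_card_le_one (by rw [hu.card_superlevelSet hi]; omega),
      setDiffs_eq_nil_of_card_le_one (by rw [hv.card_superlevelSet hi]; omega)]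

theorem stmt17 (n : ℕ) (u v s t : List ℕ) (hu : InvPerm n u s) (hv : InvPerm n v t) :
    StrongShiftEq n u v ↔ ∀ i, 1 ≤ i → i ≤ n - 1 → deltaVec s i = deltaVec t i := by
  rw [strongShiftEq_iff_setDiffs_superlevelSet hu.1 hv.1]
  exact forall_congr' fun i => imp_congr_right fun hi => by
    rw [hu.deltaVec_eq hi, hv.deltaVec_eq hi]
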